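/- arXiv:1407.2488 — 9 statements merged into one kernel-verified Lean document; each statement's English description precedes it below -/
import Mathlib

section
/- For all integers n ≥ 2, 2 ≤ k ≤ n, and reals ρ ≥ 0, θ₂ ≥ 0, the expected value of Tajima's estimator for a dispensable gene present in k of n individuals, namely θ₂·(2/(k(k−1)))·(k/n)·Σ_{s=1}^{k−1} (k−s)·C(n−1,s)^{-1}·B(n,s,ρ), is at most (k/n)·θ₂. Equivalently, the bias θ₂ − E[π̂_k] is at least ((n−k)/n)·θ₂. -/
/-!
Each weight `(j+1)/(j+1+ρ)` in `B n s ρ` is at most `1`, and by the hockey-stick identity the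
unweighted sum is `C(n-1, s)`; hence `C(n-1, s)⁻¹ · B n s ρ ≤ 1`. The sum over `s` is then at most
`∑_{s=1}^{k-1} (k - s) = k(k-1)/2`, which exactly cancels the normalisation `2/(k(k-1))`.
-/

open Finset

/-- `B n s ρ = Σ_{j=0}^{n-s-1} ((j+1)/(j+1+ρ))·C(n−j−2, s−1)`. -/
noncomputable def B (n s : ℕ) (ρ : ℝ) : ℝ :=
  ∑ j ∈ Finset.range (n - s), ((j : ℝ) + 1) / ((j : ℝ) + 1 + ρ) * ((n - j - 2).choose (s - 1) : ℝ)

theorem sum_range_sub_sub_two_choose {n s : ℕ} (hs : 1 ≤ s) (hsn : s < n) :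
    ∑ j ∈ range (n - s), (n - j - 2).choose (s - 1) = (n - 1).choose s := by
  obtain ⟨m, rfl⟩ : ∃ m, s = m + 1 := ⟨s - 1, by omega⟩
  obtain ⟨N, rfl⟩ : ∃ N, n = N + m + 2 := ⟨n - m - 2, by omega⟩
  rw [show N + m + 2 - (m + 1) = N + 1 by omega, show N + m + 2 - 1 = N + m + 1 by omega,
    ← Nat.sum_range_add_choose, ← sum_range_reflect]
  refine sum_congr rfl fun j hj => ?_
  rw [mem_range] at hj
  congr 1
  omega

theorem B_le_choose {n s : ℕ} {ρ : ℝ} (hρ : 0 ≤ ρ) (hs : 1 ≤ s) (hsn : s < n) :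
    B n s ρ ≤ (n - 1).choose s := by
  rw [← sum_range_sub_sub_two_choose hs hsn, Nat.cast_sum]
  refine sum_le_sum fun j _ => mul_le_of_le_one_left (by positivity) ?_
  exact div_le_one_of_le₀ (by linarith) (by positivity)

theorem sum_Icc_sub_eq (k : ℕ) : ∑ s ∈ Icc 1 (k - 1), ((k : ℝ) - s) = k * (k - 1) / 2 := by
  cases k with
  | zero => simp
  | succ m =>
    rw [Nat.add_sub_cancel]
    push_cast
    induction m with
    | zero => simp
    | succ m ih =>
      have shift : ∀ x : ℝ, (m : ℝ) + 1 + 1 - x = (m + 1 - x) + 1 := fun x => by ring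
      push_cast
      rw [sum_Icc_succ_top (by omega)]
      simp only [shift, sum_add_distrib, ih, sum_const, Nat.card_Icc, nsmul_eq_mul]
      push_cast
      ring

theorem sum_Icc_sub_mul_inv_choose_mul_B_le {n k : ℕ} {ρ : ℝ} (hρ : 0 ≤ ρ) (hkn : k ≤ n) :
    ∑ s ∈ Icc 1 (k - 1), ((k : ℝ) - s) * ((n - 1).choose s : ℝ)⁻¹ * B n s ρ ≤
      k * (k - 1) / 2 := by
  rw [← sum_Icc_sub_eq]
  refine sum_le_sum fun s hs => ?_
  obtain ⟨hs1, hsk⟩ := mem_Icc.1 hs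
  have hks : (s : ℝ) ≤ k := by exact_mod_cast (by omega : s ≤ k)
  rw [mul_assoc]
  refine mul_le_of_le_one_right (by linarith) (inv_mul_le_one_of_le₀ ?_ (by positivity))
  exact B_le_choose hρ hs1 (by omega)

theorem stmt2_general (n k : ℕ) (hk : 2 ≤ k) (hkn : k ≤ n) (ρ θ₂ : ℝ)
    (hρ : 0 ≤ ρ) (hθ : 0 ≤ θ₂) :
    θ₂ * (2 / ((k : ℝ) * ((k : ℝ) - 1))) * ((k : ℝ) / (n : ℝ)) *
        (∑ s ∈ Finset.Icc 1 (k - 1),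
          ((k : ℝ) - (s : ℝ)) * (((n - 1).choose s : ℝ))⁻¹ * B n s ρ) ≤
      (k : ℝ) / (n : ℝ) * θ₂ ∧
    ((n : ℝ) - (k : ℝ)) / (n : ℝ) * θ₂ ≤
      θ₂ - θ₂ * (2 / ((k : ℝ) * ((k : ℝ) - 1))) * ((k : ℝ) / (n : ℝ)) *
        (∑ s ∈ Finset.Icc 1 (k - 1),
          ((k : ℝ) - (s : ℝ)) * (((n - 1).choose s : ℝ))⁻¹ * B n s ρ) := by
  have hk1 : (0 : ℝ) < k - 1 := by rw [sub_pos]; exact_mod_cast hk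
  have hn : (n : ℝ) ≠ 0 := by norm_cast; omega
  have upper := calc
    θ₂ * (2 / ((k : ℝ) * ((k : ℝ) - 1))) * ((k : ℝ) / (n : ℝ)) *
        (∑ s ∈ Finset.Icc 1 (k - 1), ((k : ℝ) - (s : ℝ)) * (((n - 1).choose s : ℝ))⁻¹ * B n s ρ)
      ≤ θ₂ * (2 / ((k : ℝ) * ((k : ℝ) - 1))) * ((k : ℝ) / (n : ℝ)) * (k * (k - 1) / 2) := by
        gcongr
        exact sum_Icc_sub_mul_inv_choose_mul_B_le hρ hkn
    _ = k / n * θ₂ := by field_simp [hk1.ne']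
  refine ⟨upper, ?_⟩
  have : ((n : ℝ) - k) / n * θ₂ = θ₂ - k / n * θ₂ := by field_simp
  linarith

/-- the expected Tajima estimator for a dispensable gene in `k` of `n`
individuals is at most `(k/n)·θ₂`; equivalently the bias is at least `((n−k)/n)·θ₂`. -/
theorem stmt2 (n k : ℕ) (hn : 2 ≤ n) (hk : 2 ≤ k) (hkn : k ≤ n) (ρ θ₂ : ℝ)
    (hρ : 0 ≤ ρ) (hθ : 0 ≤ θ₂) :
    θ₂ * (2 / ((k : ℝ) * ((k : ℝ) - 1))) * ((k : ℝ) / (n : ℝ)) *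
        (∑ s ∈ Finset.Icc 1 (k - 1),
          ((k : ℝ) - (s : ℝ)) * (((n - 1).choose s : ℝ))⁻¹ * B n s ρ) ≤
      (k : ℝ) / (n : ℝ) * θ₂ ∧
    ((n : ℝ) - (k : ℝ)) / (n : ℝ) * θ₂ ≤
      θ₂ - θ₂ * (2 / ((k : ℝ) * ((k : ℝ) - 1))) * ((k : ℝ) / (n : ℝ)) *
        (∑ s ∈ Finset.Icc 1 (k - 1),
          ((k : ℝ) - (s : ℝ)) * (((n - 1).choose s : ℝ))⁻¹ * B n s ρ) :=
  stmt2_general n k hk hkn ρ θ₂ hρ hθ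
end

section
/- For every integer n ≥ 2 and every real ρ ≥ 0, the following identity holds: Σ_{s=1}^{n−1} (1/s)·C(n−1,s)^{-1}·B(n,s,ρ) = Σ_{s=1}^{n−1} 1/(s+ρ). Consequently, the expected Watterson estimator for a dispensable gene present in all n individuals equals θ₂·(Σ_{s=1}^{n−1} 1/(s+ρ))/(Σ_{s=1}^{n−1} 1/s). -/
/-!
Expanding `B` and exchanging the two sums, the coefficient of `(j+1)/(j+1+ρ)` is
`Σ_s (1/s) C(m+1+j, s)⁻¹ C(m, s-1)` with `m + 1 = n - 1 - j`, and this equals `1/(j+1)`.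
Indeed `(1/s) C(m, s-1) = C(m+1, s)/(m+1)`, and `Σ_{s ≤ M} C(M, s)/C(M+k, s) = (M+k+1)/(k+1)`
because `C(M, s)/C(M+k, s) = C(M-s+k, k)/C(M+k, k)` and the hockey-stick identity sums the
numerators to `C(M+k+1, k+1)`.
-/

open Finset

lemma Finset.sum_Icc_one_eq_sum_range {M : Type*} [AddCommMonoid M] (f : ℕ → M) (n : ℕ) :
    ∑ i ∈ Icc 1 n, f i = ∑ i ∈ range n, f (i + 1) := by
  rw [range_eq_Ico, sum_Ico_add', zero_add, Ico_add_one_right_eq_Icc]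

lemma Nat.sum_range_choose_sub_add (m k : ℕ) :
    ∑ s ∈ range (m + 1), (m - s + k).choose k = (m + k + 1).choose (k + 1) := by
  rw [← sum_range_add_choose, ← sum_range_reflect]
  refine sum_congr rfl fun s hs => ?_
  rw [mem_range] at hs
  congr 2
  omega

lemma choose_div_choose_add_eq (m k : ℕ) {s : ℕ} (hs : s ≤ m) :
    (m.choose s : ℝ) / (m + k).choose s = (m - s + k).choose k / (m + k).choose k := by
  have hmul : (m + k).choose k * m.choose s = (m + k).choose s * (m - s + k).choose k := by
    rw [← Nat.choose_symm_add, Nat.choose_mul hs, ← Nat.choose_symm_add]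
    congr 2; omega
  have hne : ((m + k).choose s : ℝ) ≠ 0 := by exact_mod_cast Nat.choose_ne_zero (by omega)
  have hne' : ((m + k).choose k : ℝ) ≠ 0 := by exact_mod_cast Nat.choose_ne_zero (by omega)
  rw [div_eq_div_iff hne hne']
  exact_mod_cast (mul_comm _ _).trans (hmul.trans (mul_comm _ _))

lemma sum_range_choose_div_choose_add (m k : ℕ) :
    ∑ s ∈ range (m + 1), (m.choose s : ℝ) / (m + k).choose s = (m + k + 1) / (k + 1) := by
  have hstick : ∑ s ∈ range (m + 1), ((m - s + k).choose k : ℝ) = (m + k + 1).choose (k + 1) := by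
    exact_mod_cast Nat.sum_range_choose_sub_add m k
  have hratio : ((m + k + 1) * (m + k).choose k : ℝ) = (m + k + 1).choose (k + 1) * (k + 1) := by
    exact_mod_cast Nat.add_one_mul_choose_eq (m + k) k
  have hne : ((m + k).choose k : ℝ) ≠ 0 := by exact_mod_cast Nat.choose_ne_zero (by omega)
  rw [sum_congr rfl fun s hs => choose_div_choose_add_eq m k (Nat.lt_succ_iff.mp (mem_range.mp hs)),
    ← sum_div, hstick, div_eq_div_iff hne (by positivity)]
  linarith

lemma sum_Icc_inv_mul_inv_choose_mul_choose (m k : ℕ) :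
    ∑ s ∈ Icc 1 (m + 1), 1 / (s : ℝ) * ((m + 1 + k).choose s : ℝ)⁻¹ * (m.choose (s - 1) : ℝ) =
      1 / (k + 1) := by
  have hterm : ∀ s : ℕ, 1 / (s + 1 : ℝ) * (m.choose s : ℝ) = (m + 1).choose (s + 1) / (m + 1) := by
    intro s
    have h : ((m + 1) * m.choose s : ℝ) = (m + 1).choose (s + 1) * (s + 1) := by
      exact_mod_cast Nat.add_one_mul_choose_eq m s
    field_simp
    linarith
  have hsum := sum_range_choose_div_choose_add (m + 1) k
  rw [sum_range_succ'] at hsum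
  calc ∑ s ∈ Icc 1 (m + 1), 1 / (s : ℝ) * ((m + 1 + k).choose s : ℝ)⁻¹ * (m.choose (s - 1) : ℝ)
      = 1 / (m + 1) * ∑ s ∈ range (m + 1),
          ((m + 1).choose (s + 1) : ℝ) / (m + 1 + k).choose (s + 1) := by
        rw [sum_Icc_one_eq_sum_range, mul_sum]
        refine sum_congr rfl fun s _ => ?_
        rw [Nat.add_sub_cancel, mul_right_comm, Nat.cast_add_one, hterm]
        ring
    _ = 1 / (k + 1) := by
        simp only [Nat.choose_zero_right, Nat.cast_one, div_one] at hsum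
        push_cast at hsum
        rw [eq_sub_of_add_eq hsum]
        field_simp
        ring

theorem sum_Icc_inv_mul_inv_choose_mul_B (n : ℕ) (ρ : ℝ) :
    ∑ s ∈ Icc 1 (n - 1), 1 / (s : ℝ) * ((n - 1).choose s : ℝ)⁻¹ * B n s ρ =
      ∑ s ∈ Icc 1 (n - 1), 1 / ((s : ℝ) + ρ) := by
  calc ∑ s ∈ Icc 1 (n - 1), 1 / (s : ℝ) * ((n - 1).choose s : ℝ)⁻¹ * B n s ρ
      = ∑ s ∈ Icc 1 (n - 1), ∑ j ∈ range (n - s), ((j : ℝ) + 1) / ((j : ℝ) + 1 + ρ) *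
          (1 / (s : ℝ) * ((n - 1).choose s : ℝ)⁻¹ * ((n - j - 2).choose (s - 1) : ℝ)) := by
        simp only [B, mul_sum]
        refine sum_congr rfl fun s _ => sum_congr rfl fun j _ => ?_
        ring
    _ = ∑ j ∈ range (n - 1), ∑ s ∈ Icc 1 (n - 1 - j), ((j : ℝ) + 1) / ((j : ℝ) + 1 + ρ) *
          (1 / (s : ℝ) * ((n - 1).choose s : ℝ)⁻¹ * ((n - j - 2).choose (s - 1) : ℝ)) :=
        sum_comm' fun s j => by simp only [mem_Icc, mem_range]; omega
    _ = ∑ j ∈ range (n - 1), ((j : ℝ) + 1) / ((j : ℝ) + 1 + ρ) * (1 / ((j : ℝ) + 1)) := by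
        refine sum_congr rfl fun j hj => ?_
        obtain ⟨m, hm⟩ : ∃ m, n - 1 - j = m + 1 := ⟨n - 2 - j, by rw [mem_range] at hj; omega⟩
        have hn : n - 1 = m + 1 + j := by omega
        have hnj : n - j - 2 = m := by omega
        rw [← mul_sum, hm, hn, hnj, sum_Icc_inv_mul_inv_choose_mul_choose]
    _ = ∑ j ∈ range (n - 1), 1 / ((j + 1 : ℕ) + ρ) := by
        refine sum_congr rfl fun j _ => ?_
        push_cast
        field_simp
    _ = ∑ s ∈ Icc 1 (n - 1), 1 / ((s : ℝ) + ρ) :=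
        (sum_Icc_one_eq_sum_range (fun s : ℕ => 1 / ((s : ℝ) + ρ)) _).symm

theorem stmt4_general (n : ℕ) (ρ : ℝ) :
    (∑ s ∈ Finset.Icc 1 (n - 1), (1 / (s : ℝ)) * (((n - 1).choose s : ℝ))⁻¹ * B n s ρ) =
      (∑ s ∈ Finset.Icc 1 (n - 1), 1 / ((s : ℝ) + ρ)) ∧
    ∀ θ₂ : ℝ,
      θ₂ * (∑ s ∈ Finset.Icc 1 (n - 1), (1 / (s : ℝ)) * (((n - 1).choose s : ℝ))⁻¹ * B n s ρ) /
          (∑ s ∈ Finset.Icc 1 (n - 1), 1 / (s : ℝ)) =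
        θ₂ * (∑ s ∈ Finset.Icc 1 (n - 1), 1 / ((s : ℝ) + ρ)) /
          (∑ s ∈ Finset.Icc 1 (n - 1), 1 / (s : ℝ)) := by
  have h := sum_Icc_inv_mul_inv_choose_mul_B n ρ
  exact ⟨h, fun θ₂ => by rw [h]⟩

/-- `Σ_{s=1}^{n−1} (1/s)·C(n−1,s)⁻¹·B(n,s,ρ) = Σ_{s=1}^{n−1} 1/(s+ρ)`, so the
expected Watterson estimator for a gene present in all `n` individuals equals
`θ₂·(Σ 1/(s+ρ))/(Σ 1/s)`. -/
theorem stmt4 (n : ℕ) (hn : 2 ≤ n) (ρ : ℝ) (hρ : 0 ≤ ρ) :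
    (∑ s ∈ Finset.Icc 1 (n - 1), (1 / (s : ℝ)) * (((n - 1).choose s : ℝ))⁻¹ * B n s ρ) =
      (∑ s ∈ Finset.Icc 1 (n - 1), 1 / ((s : ℝ) + ρ)) ∧
    ∀ θ₂ : ℝ,
      θ₂ * (∑ s ∈ Finset.Icc 1 (n - 1), (1 / (s : ℝ)) * (((n - 1).choose s : ℝ))⁻¹ * B n s ρ) /
          (∑ s ∈ Finset.Icc 1 (n - 1), 1 / (s : ℝ)) =
        θ₂ * (∑ s ∈ Finset.Icc 1 (n - 1), 1 / ((s : ℝ) + ρ)) /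
          (∑ s ∈ Finset.Icc 1 (n - 1), 1 / (s : ℝ)) :=
  stmt4_general n ρ
end

section
/- For every integer n ≥ 2 and every real ρ ≥ 0, the following identity holds: (2/(n(n−1)))·Σ_{s=1}^{n−1} (n−s)·C(n−1,s)^{-1}·B(n,s,ρ) = 1 − 2ρ·((n+1)/(n−1))·Σ_{j=0}^{n−2} 1/((j+1+ρ)(j+2)(j+3)). Consequently, the expected Tajima estimator for a dispensable gene present in all n individuals equals θ₂·(1 − 2ρ·((n+1)/(n−1))·Σ_{j=0}^{n−2} 1/((j+1+ρ)(j+2)(j+3))). -/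
/-!
Since `(n - s) / C(n-1, s) = n / C(n, s)`, exchanging the two sums turns the left-hand side into
`Σ_j (j+1)/(j+1+ρ) · n · Σ_t C(m, t) / C(n, t+1)` with `m = n - j - 2`. The inner sum telescopes,
with potential `C(m, t) / C(n, t) · (t (n - m) + n + 1)`, to `(n+1) / ((n-m)(n-m+1))`, which is
`(n+1) / ((j+2)(j+3))`. Finally `(j+1)/(j+1+ρ) = 1 - ρ/(j+1+ρ)` and
`Σ_{j<n-1} 1/((j+2)(j+3)) = (n-1) / (2(n+1))`.
-/

open Finset

theorem Nat.cast_add_one_mul_choose_succ {R : Type*} [CommRing R] (m t : ℕ) :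
    ((t : R) + 1) * m.choose (t + 1) = ((m : R) - t) * m.choose t := by
  rcases le_or_gt t m with htm | hmt
  · have h := congr_arg ((↑) : ℕ → R) (Nat.choose_succ_right_eq m t)
    push_cast [Nat.cast_sub htm] at h
    linear_combination h
  · simp [Nat.choose_eq_zero_of_lt hmt, Nat.choose_eq_zero_of_lt (hmt.trans t.lt_succ_self)]

theorem sum_range_choose_div_choose_succ {m n R : ℕ} (hmR : m < R) (hRn : R ≤ n) :
    ∑ t ∈ range R, (m.choose t : ℝ) / n.choose (t + 1) =
      ((n : ℝ) + 1) / (((n : ℝ) - m) * ((n : ℝ) - m + 1)) := by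
  have hk : (0 : ℝ) < (n : ℝ) - m := sub_pos.mpr (by exact_mod_cast hmR.trans_le hRn)
  set g : ℕ → ℝ := fun t ↦ m.choose t / n.choose t * (t * ((n : ℝ) - m) + n + 1) with hg
  have step : ∀ t ∈ range R, (m.choose t : ℝ) / n.choose (t + 1) =
      (g t - g (t + 1)) / (((n : ℝ) - m) * ((n : ℝ) - m + 1)) := by
    intro t ht
    have htn : t + 1 ≤ n := (mem_range.mp ht).trans_le hRn
    have hn₀ : (n.choose t : ℝ) ≠ 0 := by exact_mod_cast (Nat.choose_pos (by omega)).ne'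
    have hnt : (n : ℝ) - t ≠ 0 := sub_ne_zero.mpr (by exact_mod_cast (by omega : n ≠ t))
    have ht₁ : (t : ℝ) + 1 ≠ 0 := t.cast_add_one_ne_zero
    have hm : (m.choose (t + 1) : ℝ) = ((m : ℝ) - t) * m.choose t / (t + 1) :=
      eq_div_of_mul_eq ht₁ (by rw [mul_comm, Nat.cast_add_one_mul_choose_succ])
    have hn : (n.choose (t + 1) : ℝ) = ((n : ℝ) - t) * n.choose t / (t + 1) :=
      eq_div_of_mul_eq ht₁ (by rw [mul_comm, Nat.cast_add_one_mul_choose_succ])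
    simp only [hg]
    push_cast
    rw [hm, hn]
    field_simp
    ring
  rw [sum_congr rfl step, ← sum_div, sum_range_sub']
  simp [hg, Nat.choose_eq_zero_of_lt hmR]

theorem Nat.cast_sub_div_choose_sub_one {n s : ℕ} (hs : s < n) :
    ((n : ℝ) - s) / (n - 1).choose s = n / n.choose s := by
  obtain ⟨n, rfl⟩ : ∃ k, n = k + 1 := ⟨n - 1, by omega⟩
  have h := congr_arg ((↑) : ℕ → ℝ) (Nat.choose_mul_succ_eq n s)
  push_cast [Nat.cast_sub hs.le] at h
  have h₀ : (n.choose s : ℝ) ≠ 0 := by exact_mod_cast (Nat.choose_pos (by omega)).ne'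
  have h₁ : ((n + 1).choose s : ℝ) ≠ 0 := by exact_mod_cast (Nat.choose_pos (by omega)).ne'
  rw [Nat.add_sub_cancel, div_eq_div_iff h₀ h₁]
  push_cast
  linear_combination -h

theorem sum_Icc_sub_mul_inv_choose_sub_one_mul_choose {n j : ℕ} (hj : j + 2 ≤ n) :
    ∑ s ∈ Icc 1 (n - 1), ((n : ℝ) - s) * ((n - 1).choose s : ℝ)⁻¹ * (n - j - 2).choose (s - 1) =
      n * (n + 1) / ((j + 2) * (j + 3)) := by
  have hreindex : ∑ s ∈ Icc 1 (n - 1),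
      ((n : ℝ) - s) * ((n - 1).choose s : ℝ)⁻¹ * (n - j - 2).choose (s - 1) =
      n * ∑ t ∈ range (n - 1), ((n - j - 2).choose t : ℝ) / n.choose (t + 1) := by
    rw [mul_sum]
    refine sum_nbij' (· - 1) (· + 1) ?_ ?_ ?_ ?_ ?_ <;> intro s hs
    all_goals simp only [mem_Icc, mem_range] at hs ⊢
    any_goals omega
    rw [← div_eq_mul_inv, Nat.cast_sub_div_choose_sub_one (by omega), Nat.sub_add_cancel hs.1]
    ring
  have hgap : (n : ℝ) - (n - j - 2 : ℕ) = j + 2 := by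
    rw [Nat.cast_sub (by omega), Nat.cast_sub (by omega)]
    ring
  rw [hreindex, sum_range_choose_div_choose_succ (by omega) (by omega), hgap]
  ring

theorem B_eq_sum_range {n s : ℕ} (hs : 1 ≤ s) (ρ : ℝ) :
    B n s ρ = ∑ j ∈ range (n - 1),
      ((j : ℝ) + 1) / ((j : ℝ) + 1 + ρ) * ((n - j - 2).choose (s - 1) : ℝ) := by
  refine sum_subset (range_subset_range.mpr (by omega)) fun j hj hjs ↦ ?_
  simp only [mem_range, not_lt] at hj hjs
  rw [Nat.choose_eq_zero_of_lt (by omega), Nat.cast_zero, mul_zero]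

theorem sum_Icc_sub_mul_inv_choose_sub_one_mul_B (n : ℕ) (ρ : ℝ) :
    ∑ s ∈ Icc 1 (n - 1), ((n : ℝ) - s) * ((n - 1).choose s : ℝ)⁻¹ * B n s ρ =
      ∑ j ∈ range (n - 1),
        ((j : ℝ) + 1) / ((j : ℝ) + 1 + ρ) * (n * (n + 1) / ((j + 2) * (j + 3))) := by
  calc _ = ∑ s ∈ Icc 1 (n - 1), ∑ j ∈ range (n - 1), ((j : ℝ) + 1) / ((j : ℝ) + 1 + ρ) *
          (((n : ℝ) - s) * ((n - 1).choose s : ℝ)⁻¹ * (n - j - 2).choose (s - 1)) := by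
        refine sum_congr rfl fun s hs ↦ ?_
        rw [B_eq_sum_range (mem_Icc.mp hs).1, mul_sum]
        exact sum_congr rfl fun _ _ ↦ by ring
    _ = _ := by
        rw [sum_comm]
        refine sum_congr rfl fun j hj ↦ ?_
        rw [← mul_sum, sum_Icc_sub_mul_inv_choose_sub_one_mul_choose (by simp at hj; omega)]

theorem sum_range_one_div_add_two_mul_add_three (N : ℕ) :
    ∑ j ∈ range N, 1 / (((j : ℝ) + 2) * ((j : ℝ) + 3)) = 1 / 2 - 1 / (N + 2) := by
  have h : ∀ j ∈ range N, 1 / (((j : ℝ) + 2) * ((j : ℝ) + 3)) =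
      1 / ((j : ℝ) + 2) - 1 / (((j + 1 : ℕ) : ℝ) + 2) := fun j _ ↦ by
    push_cast
    field_simp
    ring
  rw [sum_congr rfl h, sum_range_sub' (fun j : ℕ ↦ 1 / ((j : ℝ) + 2))]
  norm_num

/-- `(2/(n(n−1)))·Σ_{s=1}^{n−1}(n−s)·C(n−1,s)⁻¹·B(n,s,ρ)
= 1 − 2ρ·((n+1)/(n−1))·Σ_{j=0}^{n−2} 1/((j+1+ρ)(j+2)(j+3))`, so the expected Tajima
estimator for a gene present in all `n` individuals equals `θ₂` times the right-hand side. -/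
theorem stmt5 (n : ℕ) (hn : 2 ≤ n) (ρ : ℝ) (hρ : 0 ≤ ρ) :
    (2 / ((n : ℝ) * ((n : ℝ) - 1))) *
        (∑ s ∈ Finset.Icc 1 (n - 1),
          ((n : ℝ) - (s : ℝ)) * (((n - 1).choose s : ℝ))⁻¹ * B n s ρ) =
      1 - 2 * ρ * (((n : ℝ) + 1) / ((n : ℝ) - 1)) *
        (∑ j ∈ Finset.range (n - 1),
          1 / (((j : ℝ) + 1 + ρ) * ((j : ℝ) + 2) * ((j : ℝ) + 3))) ∧
    ∀ θ₂ : ℝ,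
      θ₂ * ((2 / ((n : ℝ) * ((n : ℝ) - 1))) *
          (∑ s ∈ Finset.Icc 1 (n - 1),
            ((n : ℝ) - (s : ℝ)) * (((n - 1).choose s : ℝ))⁻¹ * B n s ρ)) =
        θ₂ * (1 - 2 * ρ * (((n : ℝ) + 1) / ((n : ℝ) - 1)) *
          (∑ j ∈ Finset.range (n - 1),
            1 / (((j : ℝ) + 1 + ρ) * ((j : ℝ) + 2) * ((j : ℝ) + 3)))) := by
  have hterm : ∀ j ∈ range (n - 1), ((j : ℝ) + 1) / ((j : ℝ) + 1 + ρ) *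
      (n * (n + 1) / ((j + 2) * (j + 3))) = n * (n + 1) *
        (1 / (((j : ℝ) + 2) * ((j : ℝ) + 3)) -
          ρ * (1 / (((j : ℝ) + 1 + ρ) * ((j : ℝ) + 2) * ((j : ℝ) + 3)))) := fun j _ ↦ by
    have : (j : ℝ) + 1 + ρ ≠ 0 := by positivity
    field_simp
    ring
  have hn₁ : (1 : ℝ) < n := by exact_mod_cast hn
  refine ⟨?key, fun θ₂ ↦ congrArg (θ₂ * ·) ?key⟩
  rw [sum_Icc_sub_mul_inv_choose_sub_one_mul_B, sum_congr rfl hterm, ← mul_sum, sum_sub_distrib,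
    ← mul_sum, sum_range_one_div_add_two_mul_add_three, Nat.cast_pred (by omega),
    show (n : ℝ) - 1 + 2 = n + 1 by ring]
  have : (n : ℝ) - 1 ≠ 0 := by linarith
  have : (n : ℝ) + 1 ≠ 0 := by positivity
  field_simp
  ring
end

section
/- For all integers 1 ≤ s < k ≤ n and every real ρ > 0, the following identity over the reals holds: Σ_{m=1}^{k−s+1} m·s!·(Π_{b=m−1}^{k−s−1} b)·(Π_{b=m}^{k−1} b)^{-1}·C(k−m, s−1)·Σ_{j=1}^{n} C(j, m)·C(n−j, k−m)·(1/(j(j−1+ρ))) = C(n,k)·(k/n)·C(n−1,s)^{-1}·Σ_{j=0}^{n−s−1} ((j+1)/(j+1+ρ))·C(n−j−2, s−1). (This is the key combinatorial identity establishing the closed form of the expected joint gene and site frequency spectrum E[G_{k,s}] for s < k.) -/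
open Finset

/-!
After the rearrangement `m · s! · ∏_{b=m-1}^{k-s-1} b / ∏_{b=m}^{k-1} b = m(m-1) / C(k-1, s)`,
swap the two sums. For fixed `j`, `Σ_m m(m-1) C(j,m) C(n-j,k-m) C(k-m,s-1)` counts `k`-subsets of
`[n]` with an ordered pair marked among the first `j` elements and `s-1` points marked among the
others; marking first gives `j(j-1) C(n-j,s-1) C(n-s-1,k-s-1)` (Vandermonde). The factor `j(j-1)`
cancels against the weight `1/(j(j-1+ρ))`, the shift `j ↦ j-2` produces the sum on the right, and
`C(n,k) (k/n) / C(n-1,s) = C(n-s-1,k-s-1) / C(k-1,s)`.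
-/

theorem Nat.factorial_mul_prod_Icc_add_one {a c : ℕ} (h : a ≤ c) :
    a.factorial * ∏ b ∈ Icc (a + 1) c, b = c.factorial := by
  induction c, h using Nat.le_induction with
  | base => simp
  | succ c _ ih =>
    rw [prod_Icc_succ_top (by omega), ← mul_assoc, ih, Nat.factorial_succ, mul_comm]

theorem mul_factorial_mul_prod_Icc_mul_inv_prod_Icc {k s m : ℕ} (hs : 1 ≤ s) (hsk : s < k)
    (hm : m ∈ Icc 1 (k - s + 1)) :
    (m : ℝ) * (s.factorial : ℝ) * (∏ b ∈ Icc (m - 1) (k - s - 1), (b : ℝ)) *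
        (∏ b ∈ Icc m (k - 1), (b : ℝ))⁻¹ =
      (m * (m - 1) : ℕ) / ((k - 1).choose s : ℝ) := by
  obtain ⟨c, rfl⟩ : ∃ c, k = c + s + 1 := ⟨k - s - 1, by omega⟩
  rw [mem_Icc, show c + s + 1 - s + 1 = c + 2 by omega] at hm
  rw [show c + s + 1 - s - 1 = c by omega, Nat.add_sub_cancel]
  obtain rfl | ⟨i, rfl⟩ : m = 1 ∨ ∃ i, m = i + 2 := by
    rcases hm.1.eq_or_lt with h | h
    · exact .inl h.symm
    · exact .inr ⟨m - 2, by omega⟩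
  · -- the numerator product starts at the factor `0`
    rw [prod_eq_zero (i := 0) (by simp) Nat.cast_zero]
    simp
  have hP : (i.factorial : ℝ) * ∏ b ∈ Icc (i + 1) c, (b : ℝ) = c.factorial := by
    rw [← Nat.cast_prod, ← Nat.cast_mul, Nat.factorial_mul_prod_Icc_add_one (by omega)]
  have hQ : ((i + 1).factorial : ℝ) * ∏ b ∈ Icc (i + 2) (c + s), (b : ℝ) = (c + s).factorial := by
    rw [← Nat.cast_prod, ← Nat.cast_mul, Nat.factorial_mul_prod_Icc_add_one (by omega)]
  rw [Nat.cast_choose ℝ (by omega : s ≤ c + s), Nat.add_sub_cancel,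
    show i + 2 - 1 = i + 1 from rfl, eq_div_of_mul_eq (by positivity) ((mul_comm _ _).trans hP),
    eq_div_of_mul_eq (by positivity) ((mul_comm _ _).trans hQ), Nat.factorial_succ]
  push_cast
  field_simp

theorem Nat.mul_sub_one_eq_two_mul_choose_two (m : ℕ) : m * (m - 1) = 2 * m.choose 2 := by
  rw [mul_comm 2, Nat.choose_two_right, Nat.div_two_mul_two_of_even (Nat.even_mul_pred_self m)]

theorem Nat.add_two_mul_add_one_mul_choose_add_two (j i : ℕ) :
    (i + 2) * (i + 1) * j.choose (i + 2) = j * (j - 1) * (j - 2).choose i := by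
  have h := Nat.choose_mul (n := j) (k := i + 2) (s := 2) (by omega)
  have hi : (i + 2) * (i + 1) = 2 * (i + 2).choose 2 := Nat.mul_sub_one_eq_two_mul_choose_two _
  rw [Nat.add_sub_cancel] at h
  rw [hi, Nat.mul_sub_one_eq_two_mul_choose_two, mul_assoc, mul_assoc, mul_comm (choose _ 2), h]

theorem Nat.sum_range_choose_mul_choose (a b c : ℕ) :
    ∑ i ∈ range (c + 1), a.choose i * b.choose (c - i) = (a + b).choose c := by
  rw [Nat.add_choose_eq, Nat.sum_antidiagonal_eq_sum_range_succ_mk]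

theorem Finset.sum_Icc_one_eq_add_sum_range {M : Type*} [AddCommMonoid M] (f : ℕ → M) (c : ℕ) :
    ∑ m ∈ Icc 1 (c + 1), f m = f 1 + ∑ i ∈ range c, f (i + 2) := by
  rw [← Ico_add_one_right_eq_Icc, sum_Ico_eq_sum_range, Nat.add_sub_cancel, sum_range_succ',
    add_comm]
  exact congrArg _ (sum_congr rfl fun i _ => by rw [add_comm 1, add_assoc])

theorem Nat.sum_Icc_mul_sub_one_mul_choose_mul_choose_mul_choose {n k s j : ℕ} (hs : 1 ≤ s)
    (hsk : s < k) (hjn : j ≤ n) :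
    ∑ m ∈ Icc 1 (k - s + 1),
        m * (m - 1) * (k - m).choose (s - 1) * (j.choose m * (n - j).choose (k - m)) =
      j * (j - 1) * (n - j).choose (s - 1) * (n - s - 1).choose (k - s - 1) := by
  obtain ⟨t, rfl⟩ : ∃ t, s = t + 1 := ⟨s - 1, by omega⟩
  obtain ⟨c, rfl⟩ : ∃ c, k = c + t + 2 := ⟨k - t - 2, by omega⟩
  have hterm : ∀ i ∈ range (c + 1),
      (i + 2) * (i + 2 - 1) * (c + t + 2 - (i + 2)).choose t *
          (j.choose (i + 2) * (n - j).choose (c + t + 2 - (i + 2))) =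
        j * (j - 1) * (n - j).choose t * ((j - 2).choose i * (n - j - t).choose (c - i)) := by
    intro i hi
    have hk : c + t + 2 - (i + 2) = c - i + t := by have := mem_range.1 hi; omega
    have hsplit := Nat.choose_mul (n := n - j) (k := c - i + t) (s := t) le_add_self
    rw [Nat.add_sub_cancel] at hsplit
    rw [hk, show i + 2 - 1 = i + 1 from rfl]
    calc _ = (i + 2) * (i + 1) * j.choose (i + 2) *
          ((n - j).choose (c - i + t) * (c - i + t).choose t) := by ring
      _ = _ := by rw [Nat.add_two_mul_add_one_mul_choose_add_two, hsplit]; ring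
  rw [Nat.add_sub_cancel, show c + t + 2 - (t + 1) + 1 = c + 1 + 1 by omega,
    show c + t + 2 - (t + 1) - 1 = c by omega, sum_Icc_one_eq_add_sum_range,
    sum_congr rfl hterm, ← mul_sum, Nat.sum_range_choose_mul_choose]
  simp only [tsub_self, mul_zero, zero_mul, zero_add]
  rcases lt_or_ge j 2 with hj | hj
  · interval_cases j <;> simp
  rcases lt_or_ge (n - j) t with hnj | hnj
  · simp [Nat.choose_eq_zero_of_lt hnj]
  · rw [show j - 2 + (n - j - t) = n - (t + 1) - 1 by omega]

theorem sum_mul_sub_one_mul_choose_mul_sum_choose_mul_choose_mul {n k s : ℕ} (hs : 1 ≤ s)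
    (hsk : s < k) (w : ℕ → ℝ) :
    ∑ m ∈ Icc 1 (k - s + 1), ((m * (m - 1) : ℕ) : ℝ) * ((k - m).choose (s - 1) : ℝ) *
        ∑ j ∈ Icc 1 n, (j.choose m : ℝ) * ((n - j).choose (k - m) : ℝ) * w j =
      (n - s - 1).choose (k - s - 1) *
        ∑ j ∈ Icc 1 n, ((j * (j - 1) : ℕ) : ℝ) * ((n - j).choose (s - 1) : ℝ) * w j := by
  simp only [mul_sum]
  rw [sum_comm]
  refine sum_congr rfl fun j hj => ?_
  calc _ = ((∑ m ∈ Icc 1 (k - s + 1),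
        m * (m - 1) * (k - m).choose (s - 1) * (j.choose m * (n - j).choose (k - m)) : ℕ) : ℝ) *
          w j := by
        rw [Nat.cast_sum, sum_mul]
        refine sum_congr rfl fun m _ => ?_
        push_cast
        ring
    _ = _ := by
      rw [Nat.sum_Icc_mul_sub_one_mul_choose_mul_choose_mul_choose hs hsk (mem_Icc.1 hj).2]
      push_cast
      ring

theorem cast_choose_mul_div_mul_inv_choose {n k s : ℕ} (hsk : s < k) (hkn : k ≤ n) :
    (n.choose k : ℝ) * ((k : ℝ) / n) * ((n - 1).choose s : ℝ)⁻¹ =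
      (n - s - 1).choose (k - s - 1) / ((k - 1).choose s : ℝ) := by
  obtain ⟨k, rfl⟩ : ∃ k', k = k' + 1 := ⟨k - 1, by omega⟩
  obtain ⟨n, rfl⟩ : ∃ n', n = n' + 1 := ⟨n - 1, by omega⟩
  have hpull : ((n + 1 : ℕ) : ℝ) * n.choose k = (n + 1).choose (k + 1) * (k + 1 : ℕ) := by
    exact_mod_cast Nat.add_one_mul_choose_eq n k
  have hsplit : (n.choose k : ℝ) * k.choose s = n.choose s * (n - s).choose (k - s) := by
    exact_mod_cast Nat.choose_mul (by omega)
  have hns : (n.choose s : ℝ) ≠ 0 := by exact_mod_cast (Nat.choose_pos (by omega)).ne'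
  have hks : (k.choose s : ℝ) ≠ 0 := by exact_mod_cast (Nat.choose_pos (by omega)).ne'
  simp only [Nat.add_sub_cancel, show n + 1 - s - 1 = n - s by omega,
    show k + 1 - s - 1 = k - s by omega]
  rw [eq_div_iff hks]
  push_cast at hpull ⊢
  field_simp
  linear_combination (-(k.choose s : ℝ)) * hpull + ((n : ℝ) + 1) * hsplit

theorem B_eq_sum_Icc {n s : ℕ} (hs : 1 ≤ s) (ρ : ℝ) :
    B n s ρ = ∑ j ∈ Icc 1 n, ((j : ℝ) - 1) / ((j : ℝ) - 1 + ρ) * ((n - j).choose (s - 1) : ℝ) := by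
  rcases n with _ | c
  · simp [B]
  rw [sum_Icc_one_eq_add_sum_range, B]
  simp only [Nat.cast_one, sub_self, zero_div, zero_mul, zero_add]
  refine sum_subset_zero_on_sdiff (range_subset_range.2 (by omega)) (fun i hi => ?_)
    (fun i _ => ?_)
  · rw [mem_sdiff, mem_range, mem_range] at hi
    rw [Nat.choose_eq_zero_of_lt (by omega), Nat.cast_zero, mul_zero]
  · rw [show c + 1 - (i + 2) = c + 1 - i - 2 by omega]
    push_cast
    ring

theorem stmt7_general (n k s : ℕ) (hs : 1 ≤ s) (hsk : s < k) (hkn : k ≤ n) (ρ : ℝ) :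
    (∑ m ∈ Finset.Icc 1 (k - s + 1),
      (m : ℝ) * (Nat.factorial s : ℝ) * (∏ b ∈ Finset.Icc (m - 1) (k - s - 1), (b : ℝ)) *
        (∏ b ∈ Finset.Icc m (k - 1), (b : ℝ))⁻¹ * ((k - m).choose (s - 1) : ℝ) *
        (∑ j ∈ Finset.Icc 1 n,
          (j.choose m : ℝ) * ((n - j).choose (k - m) : ℝ) *
            (1 / ((j : ℝ) * ((j : ℝ) - 1 + ρ))))) =
      (n.choose k : ℝ) * ((k : ℝ) / (n : ℝ)) * (((n - 1).choose s : ℝ))⁻¹ *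
        (∑ j ∈ Finset.range (n - s),
          ((j : ℝ) + 1) / ((j : ℝ) + 1 + ρ) * ((n - j - 2).choose (s - 1) : ℝ)) := by
  change _ = _ * B n s ρ
  rw [cast_choose_mul_div_mul_inv_choose hsk hkn, B_eq_sum_Icc hs]
  calc _ = ((k - 1).choose s : ℝ)⁻¹ * ∑ m ∈ Icc 1 (k - s + 1),
        ((m * (m - 1) : ℕ) : ℝ) * ((k - m).choose (s - 1) : ℝ) *
          ∑ j ∈ Icc 1 n, (j.choose m : ℝ) * ((n - j).choose (k - m) : ℝ) *
            (1 / ((j : ℝ) * ((j : ℝ) - 1 + ρ))) := by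
        rw [mul_sum]
        refine sum_congr rfl fun m hm => ?_
        rw [mul_factorial_mul_prod_Icc_mul_inv_prod_Icc hs hsk hm]
        ring
    _ = _ := by
      rw [sum_mul_sub_one_mul_choose_mul_sum_choose_mul_choose_mul hs hsk, div_eq_inv_mul,
        mul_assoc]
      congr 2
      refine sum_congr rfl fun j hj => ?_
      have hj0 : (j : ℝ) ≠ 0 := Nat.cast_ne_zero.2 (Nat.one_le_iff_ne_zero.1 (mem_Icc.1 hj).1)
      push_cast [Nat.cast_sub (mem_Icc.1 hj).1]
      rw [mul_comm _ (((n - j).choose (s - 1) : ℕ) : ℝ), mul_assoc, mul_one_div,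
        mul_div_mul_left _ _ hj0]
      ring

/-- the key combinatorial identity for the joint gene and site frequency
spectrum `E[G_{k,s}]` in the case `s < k`. -/
theorem stmt7 (n k s : ℕ) (hs : 1 ≤ s) (hsk : s < k) (hkn : k ≤ n) (ρ : ℝ) (hρ : 0 < ρ) :
    (∑ m ∈ Finset.Icc 1 (k - s + 1),
      (m : ℝ) * (Nat.factorial s : ℝ) * (∏ b ∈ Finset.Icc (m - 1) (k - s - 1), (b : ℝ)) *
        (∏ b ∈ Finset.Icc m (k - 1), (b : ℝ))⁻¹ * ((k - m).choose (s - 1) : ℝ) *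
        (∑ j ∈ Finset.Icc 1 n,
          (j.choose m : ℝ) * ((n - j).choose (k - m) : ℝ) *
            (1 / ((j : ℝ) * ((j : ℝ) - 1 + ρ))))) =
      (n.choose k : ℝ) * ((k : ℝ) / (n : ℝ)) * (((n - 1).choose s : ℝ))⁻¹ *
        (∑ j ∈ Finset.range (n - s),
          ((j : ℝ) + 1) / ((j : ℝ) + 1 + ρ) * ((n - j - 2).choose (s - 1) : ℝ)) :=
  stmt7_general n k s hs hsk hkn ρ
end

section
/- For all integers 1 ≤ k ≤ n and every real ρ > 0, the following identity holds: Σ_{j=1}^{n−k+1} C(n−j, k−1)·(1/(j−1+ρ)) = k·C(n,k)·Σ_{j=1}^{n−k+1} C(n,j)^{-1}·(1/(j(j−1+ρ)))·C(n−k, j−1). (This is the combinatorial identity establishing the closed form of the expected joint gene and site frequency spectrum E[G_{k,s}] in the diagonal case s = k.) -/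
open Finset

/- The two sides agree summand by summand: `j C(n,j) C(n-j,k-1)` and `k C(n,k) C(n-k,j-1)` both
equal `n C(n-1,j-1) C(n-j,k-1)`, the number of ways to pick a point and then disjoint sets of
sizes `j-1` and `k-1` among the remaining `n-1` points, and the factor `1/(j-1+ρ)` is common to
the two summands. -/

theorem Nat.choose_mul_choose_sub_comm (m a b : ℕ) :
    m.choose a * (m - a).choose b = m.choose b * (m - b).choose a := by
  have ha := Nat.choose_mul (n := m) (k := a + b) (s := a) (Nat.le_add_right a b)
  have hb := Nat.choose_mul (n := m) (k := a + b) (s := b) (Nat.le_add_left b a)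
  rw [Nat.add_sub_cancel_left] at ha
  rw [Nat.add_sub_cancel] at hb
  rw [← ha, ← hb, Nat.choose_symm_add]

theorem Nat.succ_mul_choose_mul_choose_sub_succ_comm (n a b : ℕ) :
    (a + 1) * n.choose (a + 1) * (n - (a + 1)).choose b =
      (b + 1) * n.choose (b + 1) * (n - (b + 1)).choose a := by
  cases n with
  | zero => simp
  | succ m =>
    have absorb (c : ℕ) : (c + 1) * (m + 1).choose (c + 1) = (m + 1) * m.choose c := by
      rw [Nat.add_one_mul_choose_eq, Nat.mul_comm]
    rw [absorb, absorb, Nat.add_sub_add_right, Nat.add_sub_add_right, Nat.mul_assoc,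
      Nat.mul_assoc, Nat.choose_mul_choose_sub_comm m a b]

theorem Nat.cast_choose_sub_eq_mul_div {K : Type*} [Field K] [CharZero K] {n j k : ℕ} (hj : 1 ≤ j) (hk : 1 ≤ k) (hjn : j ≤ n) :
    ((n - j).choose (k - 1) : K) =
      k * n.choose k * (n.choose j : K)⁻¹ * (j : K)⁻¹ * (n - k).choose (j - 1) := by
  obtain ⟨a, rfl⟩ : ∃ a, j = a + 1 := ⟨j - 1, by omega⟩
  obtain ⟨b, rfl⟩ : ∃ b, k = b + 1 := ⟨k - 1, by omega⟩
  have key : ((a + 1 : ℕ) : K) * n.choose (a + 1) * (n - (a + 1)).choose b =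
      ((b + 1 : ℕ) : K) * n.choose (b + 1) * (n - (b + 1)).choose a := by
    exact_mod_cast Nat.succ_mul_choose_mul_choose_sub_succ_comm n a b
  have hchoose : (n.choose (a + 1) : K) ≠ 0 := by
    exact_mod_cast Nat.choose_ne_zero hjn
  have hsucc : ((a + 1 : ℕ) : K) ≠ 0 := Nat.cast_ne_zero.mpr (Nat.succ_ne_zero a)
  simp only [Nat.add_sub_cancel]
  field_simp
  linear_combination key

theorem stmt8_general (n k : ℕ) (hk : 1 ≤ k) (hkn : k ≤ n) (ρ : ℝ) :
    (∑ j ∈ Finset.Icc 1 (n - k + 1),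
      ((n - j).choose (k - 1) : ℝ) * (1 / ((j : ℝ) - 1 + ρ))) =
      (k : ℝ) * (n.choose k : ℝ) *
        (∑ j ∈ Finset.Icc 1 (n - k + 1),
          ((n.choose j : ℝ))⁻¹ * (1 / ((j : ℝ) * ((j : ℝ) - 1 + ρ))) *
            ((n - k).choose (j - 1) : ℝ)) := by
  rw [Finset.mul_sum]
  refine Finset.sum_congr rfl fun j hj => ?_
  obtain ⟨hj1, hjn⟩ := Finset.mem_Icc.mp hj
  rw [Nat.cast_choose_sub_eq_mul_div hj1 hk (by omega), one_div, one_div, mul_inv]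
  ring

/-- the combinatorial identity for the diagonal case `s = k` of the joint gene
and site frequency spectrum. -/
theorem stmt8 (n k : ℕ) (hk : 1 ≤ k) (hkn : k ≤ n) (ρ : ℝ) (hρ : 0 < ρ) :
    (∑ j ∈ Finset.Icc 1 (n - k + 1),
      ((n - j).choose (k - 1) : ℝ) * (1 / ((j : ℝ) - 1 + ρ))) =
      (k : ℝ) * (n.choose k : ℝ) *
        (∑ j ∈ Finset.Icc 1 (n - k + 1),
          ((n.choose j : ℝ))⁻¹ * (1 / ((j : ℝ) * ((j : ℝ) - 1 + ρ))) *
            ((n - k).choose (j - 1) : ℝ)) :=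
  stmt8_general n k hk hkn ρ
end

section
/- For all integers n ≥ 2, 1 ≤ s ≤ n−1 and every real ρ ≥ 0, the following identity holds: s·n·C(n−1, s)·Σ_{j=2}^{n−s+1} C(n, j)^{-1}·(1/(j(j−1+ρ)))·C(n−s−1, j−2) = Σ_{j=0}^{n−s−1} ((j+1)/(j+1+ρ))·C(n−j−2, s−1). -/
/-! Put `s = t + 1`, `n = t + m + 2` and `j = k + 2`. The two sums then agree summand by summand:
after clearing denominators, the `k`-th summands match by
`(k+1)(k+2)·C(n, k+2)·C(t+m-k, t) = s·n·C(n-1, s)·C(m, k)`, both sides being the multinomial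
coefficient `n! / (t! k! (m-k)!)`. -/

open Finset

open scoped Nat

namespace Nat

theorem succ_mul_succ_mul_choose_mul_choose_mul_factorials (a b c : ℕ) :
    (b + 1) * (b + 2) * (a + b + c + 2).choose (b + 2) * (a + c).choose a * (a ! * b ! * c !) =
      (a + b + c + 2)! := by
  have hac : (a + c).choose a * a ! * c ! = (a + c)! := by
    simpa [add_comm, mul_right_comm] using add_choose_mul_factorial_mul_factorial c a
  have hN : (a + b + c + 2).choose (b + 2) * (a + c)! * (b + 2)! = (a + b + c + 2)! := by
    simpa [show a + c + (b + 2) = a + b + c + 2 by omega] using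
      add_choose_mul_factorial_mul_factorial (a + c) (b + 2)
  rw [← hN, ← hac, factorial_succ, factorial_succ]
  ring

theorem succ_mul_mul_choose_mul_choose_mul_factorials (a b c : ℕ) :
    (a + 1) * (a + b + c + 2) * (a + b + c + 1).choose (a + 1) * (b + c).choose b *
      (a ! * b ! * c !) = (a + b + c + 2)! := by
  have hbc : (b + c).choose b * b ! * c ! = (b + c)! := by
    simpa [add_comm, mul_right_comm] using add_choose_mul_factorial_mul_factorial c b
  have hN : (a + b + c + 1).choose (a + 1) * (b + c)! * (a + 1)! = (a + b + c + 1)! := by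
    simpa [show b + c + (a + 1) = a + b + c + 1 by omega] using
      add_choose_mul_factorial_mul_factorial (b + c) (a + 1)
  rw [show a + b + c + 2 = (a + b + c + 1) + 1 by omega, factorial_succ (a + b + c + 1), ← hN,
    ← hbc, factorial_succ]
  ring

theorem succ_mul_succ_mul_choose_mul_choose_eq (a b c : ℕ) :
    (b + 1) * (b + 2) * (a + b + c + 2).choose (b + 2) * (a + c).choose a =
      (a + 1) * (a + b + c + 2) * (a + b + c + 1).choose (a + 1) * (b + c).choose b :=
  Nat.eq_of_mul_eq_mul_right (by positivity) <|
    (succ_mul_succ_mul_choose_mul_choose_mul_factorials a b c).trans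
      (succ_mul_mul_choose_mul_choose_mul_factorials a b c).symm

end Nat

theorem siteFrequency_summand_eq {K : Type*} [Field K] [CharZero K] (t m k : ℕ) (hk : k ≤ m)
    (ρ : K) :
    ((t + 1 : ℕ) : K) * ((t + m + 2 : ℕ) : K) * ((t + m + 1).choose (t + 1) : K) *
        (((t + m + 2).choose (k + 2) : K)⁻¹ *
          (1 / (((k + 2 : ℕ) : K) * (((k + 2 : ℕ) : K) - 1 + ρ))) * (m.choose k : K)) =
      ((k : K) + 1) / ((k : K) + 1 + ρ) * ((t + m - k).choose t : K) := by
  obtain ⟨c, rfl⟩ : ∃ c, m = k + c := ⟨m - k, by omega⟩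
  have key : ((k + 1) * (k + 2) * (t + k + c + 2).choose (k + 2) * (t + c).choose t : K) =
      (t + 1) * (t + k + c + 2) * (t + k + c + 1).choose (t + 1) * (k + c).choose k := by
    exact_mod_cast Nat.succ_mul_succ_mul_choose_mul_choose_eq t k c
  rw [show t + (k + c) - k = t + c by omega]
  simp only [← add_assoc]
  push_cast
  rw [show (k : K) + 2 - 1 + ρ = k + 1 + ρ by ring]
  by_cases hρ : (k : K) + 1 + ρ = 0
  -- both summands are the junk value `0`: `x / 0 = 0` and `(y * 0)⁻¹ = 0`
  · simp [hρ]
  have hchoose : ((t + k + c + 2).choose (k + 2) : K) ≠ 0 := by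
    exact_mod_cast (Nat.choose_pos (by omega)).ne'
  have hk2 : (k : K) + 2 ≠ 0 := by exact_mod_cast (k + 1).succ_ne_zero
  field_simp
  rw [← key]
  ring

theorem stmt9_general (n s : ℕ) (hs : 1 ≤ s) (hsn : s ≤ n - 1) (ρ : ℝ) :
    (s : ℝ) * (n : ℝ) * ((n - 1).choose s : ℝ) *
        (∑ j ∈ Finset.Icc 2 (n - s + 1),
          ((n.choose j : ℝ))⁻¹ * (1 / ((j : ℝ) * ((j : ℝ) - 1 + ρ))) *
            ((n - s - 1).choose (j - 2) : ℝ)) =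
      ∑ j ∈ Finset.range (n - s),
        ((j : ℝ) + 1) / ((j : ℝ) + 1 + ρ) * ((n - j - 2).choose (s - 1) : ℝ) := by
  obtain ⟨t, rfl⟩ : ∃ t, s = t + 1 := ⟨s - 1, by omega⟩
  obtain ⟨m, rfl⟩ : ∃ m, n = t + m + 2 := ⟨n - t - 2, by omega⟩
  have hIcc : Icc 2 (t + m + 2 - (t + 1) + 1) = (range (m + 1)).map (addRightEmbedding 2) := by
    rw [range_eq_Ico, map_add_right_Ico]
    ext
    simp only [mem_Icc, mem_Ico]
    omega
  rw [hIcc, sum_map, mul_sum, show t + m + 2 - (t + 1) = m + 1 by omega]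
  refine sum_congr rfl fun k hk => ?_
  simp only [addRightEmbedding_apply, show t + m + 2 - 1 = t + m + 1 by omega, Nat.add_sub_cancel,
    show t + m + 2 - k - 2 = t + m - k by omega]
  exact siteFrequency_summand_eq t m k (Nat.lt_succ_iff.mp (mem_range.mp hk)) ρ

/-- the final reindexing identity in the proof of the joint gene and site
frequency spectrum theorem. -/
theorem stmt9 (n s : ℕ) (hn : 2 ≤ n) (hs : 1 ≤ s) (hsn : s ≤ n - 1) (ρ : ℝ) (hρ : 0 ≤ ρ) :
    (s : ℝ) * (n : ℝ) * ((n - 1).choose s : ℝ) *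
        (∑ j ∈ Finset.Icc 2 (n - s + 1),
          ((n.choose j : ℝ))⁻¹ * (1 / ((j : ℝ) * ((j : ℝ) - 1 + ρ))) *
            ((n - s - 1).choose (j - 2) : ℝ)) =
      ∑ j ∈ Finset.range (n - s),
        ((j : ℝ) + 1) / ((j : ℝ) + 1 + ρ) * ((n - j - 2).choose (s - 1) : ℝ) :=
  stmt9_general n s hs hsn ρ
end

section
/- For all integers 2 ≤ m ≤ k ≤ n, the following identity holds: Σ_{j=m}^{n} C(n−j, k−m)·C(j, m)·(1/(j(j−1))) = C(n, k)·k/(n·m·(m−1)). Equivalently, with E[T_j] = 2/(j(j−1)) the expected inter-coalescence times of Kingman's n-coalescent, the expected time during which a nested subtree on k leaves has m lineages equals E[T_m^#] = (k/n)·(2/(m(m−1))). -/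
open Finset

/-! Absorption, `C(j,m)·C(m,2) = C(j,2)·C(j-2,m-2)`, turns each summand
`C(n-j,k-m)·C(j,m)/(j(j-1))` into `C(j-2,m-2)·C(n-j,k-m)/(m(m-1))`. The remaining sum is an
instance of the upper-index Vandermonde identity `∑_{a+b=N} C(a,r)·C(b,s) = C(N+1,r+s+1)`
and equals `C(n-1,k-1) = (k/n)·C(n,k)`. -/

theorem Nat.sum_antidiagonal_choose_mul_choose (N r s : ℕ) :
    ∑ p ∈ antidiagonal N, p.1.choose r * p.2.choose s = (N + 1).choose (r + s + 1) := by
  induction N generalizing r with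
  | zero => rcases r with _ | r <;> rcases s with _ | s <;> simp [Nat.choose_eq_zero_of_lt]
  | succ N ih =>
    rw [Nat.sum_antidiagonal_succ]
    rcases r with _ | r
    · have h0 := ih 0
      simp only [Nat.choose_zero_right, one_mul, zero_add] at h0 ⊢
      rw [h0, Nat.choose_succ_succ' (N + 1) s]
    · simp only [Nat.choose_succ_succ' _ r, add_mul, sum_add_distrib, ih, Nat.choose_zero_succ,
        zero_mul, zero_add]
      rw [Nat.choose_succ_succ' (N + 1) (r + 1 + s)]
      congr 2
      ring

theorem Nat.sum_Icc_choose_sub_mul_choose_sub {c n : ℕ} (hcn : c ≤ n) (a b : ℕ) :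
    ∑ j ∈ Icc c n, (j - c).choose a * (n - j).choose b = (n - c + 1).choose (a + b + 1) := by
  rw [← Nat.sum_antidiagonal_choose_mul_choose, Nat.sum_antidiagonal_eq_sum_range_succ_mk,
    ← Ico_add_one_right_eq_Icc, sum_Ico_eq_sum_range, Nat.sub_add_comm hcn]
  refine sum_congr rfl fun t _ => ?_
  simp only [Nat.add_sub_cancel_left]
  congr 2
  omega

theorem Nat.sum_Icc_choose_sub_two_mul_choose_sub {m k n : ℕ} (hm : 2 ≤ m) (hmk : m ≤ k)
    (hkn : k ≤ n) :
    ∑ j ∈ Icc m n, (j - 2).choose (m - 2) * (n - j).choose (k - m) = (n - 1).choose (k - 1) := by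
  have hextend : ∑ j ∈ Icc m n, (j - 2).choose (m - 2) * (n - j).choose (k - m) =
      ∑ j ∈ Icc 2 n, (j - 2).choose (m - 2) * (n - j).choose (k - m) := by
    refine sum_subset (Icc_subset_Icc_left hm) fun j hj hjm => ?_
    rw [mem_Icc] at hj hjm
    rw [Nat.choose_eq_zero_of_lt (by omega), zero_mul]
  rw [hextend, Nat.sum_Icc_choose_sub_mul_choose_sub (by omega)]
  congr 1 <;> omega

theorem Nat.mul_choose_sub_one {n k : ℕ} (hk : 1 ≤ k) :
    n * (n - 1).choose (k - 1) = k * n.choose k := by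
  rcases n with _ | n
  · simp [Nat.choose_eq_zero_of_lt (by omega : 0 < k)]
  obtain ⟨k, rfl⟩ : ∃ k', k = k' + 1 := ⟨k - 1, by omega⟩
  simpa [mul_comm] using Nat.add_one_mul_choose_eq n k

theorem Nat.cast_choose_div_mul_sub_one {K : Type*} [Field K] [CharZero K] {j m : ℕ}
    (hm : 2 ≤ m) (hj : 2 ≤ j) :
    (j.choose m : K) / (j * (j - 1)) = (j - 2).choose (m - 2) / (m * (m - 1)) := by
  have habsorb := congrArg (Nat.cast : ℕ → K) (Nat.choose_mul (n := j) hm)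
  push_cast [Nat.cast_choose_two] at habsorb
  have hj0 : (j : K) ≠ 0 := by norm_cast; omega
  have hj1 : (j : K) - 1 ≠ 0 := sub_ne_zero.mpr (by norm_cast; omega)
  have hm0 : (m : K) ≠ 0 := by norm_cast; omega
  have hm1 : (m : K) - 1 ≠ 0 := sub_ne_zero.mpr (by norm_cast; omega)
  field_simp
  linear_combination 2 * habsorb

theorem Nat.sum_Icc_cast_choose_mul_choose_div {K : Type*} [Field K] [CharZero K] {m k n : ℕ}
    (hm : 2 ≤ m) (hmk : m ≤ k) (hkn : k ≤ n) :
    ∑ j ∈ Icc m n, ((n - j).choose (k - m) : K) * j.choose m / (j * (j - 1)) =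
      (n - 1).choose (k - 1) / (m * (m - 1)) := by
  rw [← Nat.sum_Icc_choose_sub_two_mul_choose_sub hm hmk hkn, Nat.cast_sum, sum_div]
  refine sum_congr rfl fun j hj => ?_
  rw [mul_div_assoc, Nat.cast_choose_div_mul_sub_one hm (hm.trans (mem_Icc.mp hj).1),
    Nat.cast_mul]
  ring

/-- `Σ_{j=m}^{n} C(n−j,k−m)·C(j,m)/(j(j−1)) = C(n,k)·k/(n·m·(m−1))`;
equivalently the expected occupation time of a nested `k`-leaf subtree with `m` lineages is
`E[T_m^#] = (k/n)·(2/(m(m−1)))`. -/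
theorem stmt11 (n k m : ℕ) (hm : 2 ≤ m) (hmk : m ≤ k) (hkn : k ≤ n) :
    (∑ j ∈ Finset.Icc m n,
      ((n - j).choose (k - m) : ℝ) * (j.choose m : ℝ) * (1 / ((j : ℝ) * ((j : ℝ) - 1)))) =
      (n.choose k : ℝ) * (k : ℝ) / ((n : ℝ) * (m : ℝ) * ((m : ℝ) - 1)) ∧
    (∑ j ∈ Finset.Icc m n,
      ((n - j).choose (k - m) : ℝ) * (j.choose m : ℝ) * ((n.choose k : ℝ))⁻¹ *
        (2 / ((j : ℝ) * ((j : ℝ) - 1)))) =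
      (k : ℝ) / (n : ℝ) * (2 / ((m : ℝ) * ((m : ℝ) - 1))) := by
  have habsorb : (n : ℝ) * (n - 1).choose (k - 1) = k * n.choose k := by
    exact_mod_cast Nat.mul_choose_sub_one (by omega)
  have hn : (n : ℝ) ≠ 0 := by norm_cast; omega
  have hm1 : (m : ℝ) - 1 ≠ 0 := sub_ne_zero.mpr (by norm_cast; omega)
  have hnk : (n.choose k : ℝ) ≠ 0 := by exact_mod_cast (Nat.choose_pos hkn).ne'
  have hfirst : (∑ j ∈ Icc m n,
      ((n - j).choose (k - m) : ℝ) * (j.choose m : ℝ) * (1 / ((j : ℝ) * ((j : ℝ) - 1)))) =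
      (n.choose k : ℝ) * (k : ℝ) / ((n : ℝ) * (m : ℝ) * ((m : ℝ) - 1)) := by
    simp_rw [mul_one_div, Nat.sum_Icc_cast_choose_mul_choose_div hm hmk hkn]
    field_simp
    linear_combination habsorb
  refine ⟨hfirst, ?_⟩
  have hscale : (∑ j ∈ Icc m n,
      ((n - j).choose (k - m) : ℝ) * (j.choose m : ℝ) * ((n.choose k : ℝ))⁻¹ *
        (2 / ((j : ℝ) * ((j : ℝ) - 1)))) = 2 / n.choose k * ∑ j ∈ Icc m n,
      ((n - j).choose (k - m) : ℝ) * (j.choose m : ℝ) * (1 / ((j : ℝ) * ((j : ℝ) - 1))) := by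
    rw [mul_sum]
    exact sum_congr rfl fun j _ => by ring
  rw [hscale, hfirst]
  field_simp
end

section
/- For all integers k ≥ 2 and 1 ≤ s ≤ k−1, defining p_{k,m}(s) := C(k−m, s−1)·(s−1)!·(Π_{b=m−1}^{k−s−1} b)·(Π_{b=m}^{k−1} b)^{-1} for 2 ≤ m ≤ k−s+1, the following identity holds: Σ_{m=2}^{k−s+1} p_{k,m}(s)/(m−1) = 1/s. Equivalently, Σ_{m=2}^{k−s+1} m·p_{k,m}(s)·(1/(m(m−1))) = 1/s. -/
/-!
Both products in `p k m s` are ratios of factorials, and `(m - 1) * (m - 2)! = (m - 1)!`, so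
`p_{k,m}(s) / (m - 1) = C(k - m, s - 1) (s - 1)! (k - 1 - s)! / (k - 1)!`. Summing over `m`,
the hockey-stick identity gives `∑ C(k - m, s - 1) = C(k - 1, s)`, and
`C(k - 1, s) (s - 1)! (k - 1 - s)! / (k - 1)! = 1 / s`.
-/

open Finset

/-- `p k m s` is the probability that a particular one of `m` lineages of a `k`-coalescent
subtends exactly `s` of the `k` leaves:
`p_{k,m}(s) = C(k−m, s−1)·(s−1)!·(Π_{b=m−1}^{k−s−1} b)·(Π_{b=m}^{k−1} b)⁻¹`. -/
noncomputable def p (k m s : ℕ) : ℝ :=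
  ((k - m).choose (s - 1) : ℝ) * (Nat.factorial (s - 1) : ℝ) *
    (∏ b ∈ Finset.Icc (m - 1) (k - s - 1), (b : ℝ)) * (∏ b ∈ Finset.Icc m (k - 1), (b : ℝ))⁻¹

open Nat

lemma Nat.factorial_mul_prod_Icc {a b : ℕ} (h : a ≤ b) : a ! * ∏ i ∈ Icc (a + 1) b, i = b ! := by
  rw [← Ico_add_one_right_eq_Icc, ← prod_Ico_id_eq_factorial, ← prod_Ico_id_eq_factorial,
    prod_Ico_consecutive _ (by omega) (by omega)]

lemma prod_Icc_natCast_eq_factorial_div {a b : ℕ} (h : a ≤ b) :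
    ∏ i ∈ Icc (a + 1) b, (i : ℝ) = b ! / a ! := by
  rw [eq_div_iff (by positivity), mul_comm, ← Nat.cast_prod]
  exact_mod_cast Nat.factorial_mul_prod_Icc h

lemma p_div_sub_one_eq {k m s : ℕ} (hs : 1 ≤ s) (hm : 2 ≤ m) (hmk : m + s ≤ k + 1) :
    p k m s / ((m : ℝ) - 1) = (k - m).choose (s - 1) * ((s - 1)! * (k - 1 - s)! / (k - 1)! : ℝ) := by
  obtain ⟨j, rfl⟩ : ∃ j, m = j + 2 := ⟨m - 2, by omega⟩
  have hlow : ∏ b ∈ Icc (j + 2 - 1) (k - s - 1), (b : ℝ) = (k - 1 - s)! / j ! := by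
    rw [show j + 2 - 1 = j + 1 by omega, Nat.sub_right_comm]
    exact prod_Icc_natCast_eq_factorial_div (by omega)
  have hhigh : ∏ b ∈ Icc (j + 2) (k - 1), (b : ℝ) = (k - 1)! / (j + 1)! :=
    prod_Icc_natCast_eq_factorial_div (by omega)
  rw [p, hlow, hhigh, Nat.factorial_succ, show ((j + 2 : ℕ) : ℝ) - 1 = j + 1 by push_cast; ring]
  push_cast
  field_simp

/-- The hockey-stick identity, reindexed by `j = k - m`. -/
lemma sum_Icc_choose_sub {k s : ℕ} (hs : 1 ≤ s) (hsk : s ≤ k - 1) :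
    ∑ m ∈ Icc 2 (k - s + 1), (k - m).choose (s - 1) = (k - 1).choose s := by
  have reflect : ∑ m ∈ Icc 2 (k - s + 1), (k - m).choose (s - 1) =
      ∑ j ∈ Icc (s - 1) (k - 2), j.choose (s - 1) := by
    apply sum_nbij' (k - ·) (k - ·) <;> intro a ha <;> grind
  rw [reflect, Nat.sum_Icc_choose, show s - 1 + 1 = s by omega, show k - 2 + 1 = k - 1 by omega]

lemma choose_mul_factorial_div_eq_inv {n s : ℕ} (hs : 1 ≤ s) (hsn : s ≤ n) :
    (n.choose s : ℝ) * ((s - 1)! * (n - s)! / n ! : ℝ) = 1 / s := by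
  have key : (n.choose s * s ! * (n - s)! : ℝ) = n ! := by
    exact_mod_cast Nat.choose_mul_factorial_mul_factorial hsn
  obtain ⟨t, rfl⟩ : ∃ t, s = t + 1 := ⟨s - 1, by omega⟩
  rw [Nat.factorial_succ] at key
  rw [Nat.add_sub_cancel]
  have : (n.choose (t + 1) : ℝ) ≠ 0 := by exact_mod_cast (Nat.choose_pos hsn).ne'
  rw [← key]
  push_cast
  field_simp

theorem stmt12_general (k s : ℕ) (hs : 1 ≤ s) (hsk : s ≤ k - 1) :
    (∑ m ∈ Finset.Icc 2 (k - s + 1), p k m s / ((m : ℝ) - 1)) = 1 / (s : ℝ) ∧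
    (∑ m ∈ Finset.Icc 2 (k - s + 1), (m : ℝ) * p k m s * (1 / ((m : ℝ) * ((m : ℝ) - 1)))) =
      1 / (s : ℝ) := by
  have hsum : ∑ m ∈ Icc 2 (k - s + 1), p k m s / ((m : ℝ) - 1) = 1 / s := by
    rw [sum_congr rfl fun m hm => p_div_sub_one_eq hs (mem_Icc.1 hm).1 (by grind),
      ← sum_mul, ← Nat.cast_sum, sum_Icc_choose_sub hs hsk]
    exact choose_mul_factorial_div_eq_inv hs hsk
  refine ⟨hsum, hsum ▸ sum_congr rfl fun m hm => ?_⟩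
  have hm : (2 : ℝ) ≤ m := by exact_mod_cast (mem_Icc.1 hm).1
  have : (m : ℝ) - 1 ≠ 0 := by linarith
  field_simp

/-- `Σ_{m=2}^{k−s+1} p_{k,m}(s)/(m−1) = 1/s`; equivalently
`Σ_{m=2}^{k−s+1} m·p_{k,m}(s)·(1/(m(m−1))) = 1/s`. -/
theorem stmt12 (k s : ℕ) (hk : 2 ≤ k) (hs : 1 ≤ s) (hsk : s ≤ k - 1) :
    (∑ m ∈ Finset.Icc 2 (k - s + 1), p k m s / ((m : ℝ) - 1)) = 1 / (s : ℝ) ∧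
    (∑ m ∈ Finset.Icc 2 (k - s + 1), (m : ℝ) * p k m s * (1 / ((m : ℝ) * ((m : ℝ) - 1)))) =
      1 / (s : ℝ) :=
  stmt12_general k s hs hsk
end

section
/- For all integers 1 ≤ k ≤ n and every real ρ > 0, the following identity holds: Σ_{i=1}^{n} C(n−i, k−1)·(k−1)!·(Π_{a=i−1}^{n−k−1} (a+ρ))·(1/(i−1+ρ))·(Π_{a=i}^{n−1} (a+ρ))^{-1} = (Π_{a=n−k+1}^{n} a)/(k·Π_{a=n−k}^{n−1} (a+ρ)). Multiplying both sides by θ₁ this is the statement E[G_k] = (θ₁/k)·((n−k+1)⋯n)/((n−k+ρ)⋯(n−1+ρ)) of the gene frequency spectrum theorem. -/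
/-!
Both ρ-products in the `i`-th summand are pieces of `∏_{a=i-1}^{n-1} (a+ρ)`, so the summand
collapses to `C(n-i,k-1)·(k-1)! / ∏_{a=n-k}^{n-1} (a+ρ)`, whose denominator no longer depends on
`i`. The hockey-stick identity sums the binomials to `C(n,k)`, and `(n-k+1)⋯n = k!·C(n,k)`.
-/

open Finset

theorem prod_Icc_sub_one_mul_prod_Icc {M : Type*} [CommMonoid M] (f : ℤ → M) {a b c : ℤ}
    (hab : a ≤ b) (hbc : b ≤ c + 1) :
    (∏ x ∈ Icc a (b - 1), f x) * ∏ x ∈ Icc b c, f x = ∏ x ∈ Icc a c, f x := by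
  rw [Icc_sub_one_right_eq_Ico, ← Ico_add_one_right_eq_Icc, ← Ico_add_one_right_eq_Icc,
    ← prod_union (Ico_disjoint_Ico_consecutive a b (c + 1)), Ico_union_Ico_eq_Ico hab hbc]

theorem prod_Icc_mul_inv_eq_inv_prod_Icc {K : Type*} [Field K] (f : ℤ → K) {a b c : ℤ}
    (hf : ∀ x ∈ Icc (a - 1) c, f x ≠ 0) (hab : a ≤ b + 1) (hbc : b ≤ c + 1) (hac : a ≤ c + 1) :
    (∏ x ∈ Icc (a - 1) (b - 1), f x) * (f (a - 1))⁻¹ * (∏ x ∈ Icc a c, f x)⁻¹ =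
      (∏ x ∈ Icc b c, f x)⁻¹ := by
  have hsplit := prod_Icc_sub_one_mul_prod_Icc f (by omega : a - 1 ≤ b) hbc
  have hpeel := prod_Icc_sub_one_mul_prod_Icc f (by omega : a - 1 ≤ a) hac
  rw [Icc_self, prod_singleton] at hpeel
  have hne : ∀ {s t : ℤ}, a - 1 ≤ s → t ≤ c → ∏ x ∈ Icc s t, f x ≠ 0 := fun hs ht =>
    prod_ne_zero_iff.2 fun x hx => hf x (by rw [mem_Icc] at hx ⊢; omega)
  have hfa : f (a - 1) ≠ 0 := hf _ (by rw [mem_Icc]; omega)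
  have hprod_b := hne (by omega : a - 1 ≤ b) le_rfl
  have hprod_a := hne (by omega : a - 1 ≤ a) le_rfl
  field_simp
  rw [hsplit, ← hpeel]

theorem sum_Icc_choose_sub_s14 (n j : ℕ) : ∑ i ∈ Icc 1 n, (n - i).choose j = n.choose (j + 1) := by
  rw [← Ico_add_one_right_eq_Icc, sum_Ico_reflect (fun i => i.choose j) _ le_rfl, Nat.sub_self,
    add_tsub_cancel_right, ← range_eq_Ico]
  induction n with
  | zero => simp
  | succ n ih => rw [sum_range_succ, ih, Nat.choose_succ_succ', add_comm]

theorem prod_Icc_intCast_eq_descFactorial {R : Type*} [CommRing R] {n k : ℕ} (hkn : k ≤ n) :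
    ∏ x ∈ Icc ((n : ℤ) - k + 1) n, (x : R) = n.descFactorial k := by
  induction k with
  | zero => simp
  | succ k ih =>
    rw [Nat.descFactorial_succ, Nat.cast_mul, ← ih (by omega), Nat.cast_sub (by omega),
      ← insert_Icc_add_one_left_eq_Icc (by omega), prod_insert (by simp)]
    push_cast
    ring_nf


/-- the identity behind the gene frequency spectrum
`E[G_k] = (θ₁/k)·((n−k+1)⋯n)/((n−k+ρ)⋯(n−1+ρ))`. -/
theorem stmt14 (n k : ℕ) (hk : 1 ≤ k) (hkn : k ≤ n) (ρ : ℝ) (hρ : 0 < ρ) :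
    (∑ i ∈ Finset.Icc 1 n,
      ((n - i).choose (k - 1) : ℝ) * (Nat.factorial (k - 1) : ℝ) *
        (∏ a ∈ Finset.Icc ((i : ℤ) - 1) ((n : ℤ) - (k : ℤ) - 1), ((a : ℝ) + ρ)) *
        (1 / ((i : ℝ) - 1 + ρ)) *
        (∏ a ∈ Finset.Icc (i : ℤ) ((n : ℤ) - 1), ((a : ℝ) + ρ))⁻¹) =
      (∏ a ∈ Finset.Icc ((n : ℤ) - (k : ℤ) + 1) (n : ℤ), (a : ℝ)) /
        ((k : ℝ) * ∏ a ∈ Finset.Icc ((n : ℤ) - (k : ℤ)) ((n : ℤ) - 1), ((a : ℝ) + ρ)) := by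
  have hpos : ∀ x : ℤ, 0 ≤ x → (x : ℝ) + ρ ≠ 0 := fun x hx => by
    have : (0 : ℝ) ≤ x := by exact_mod_cast hx
    positivity
  have hterm : ∀ i ∈ Icc 1 n,
      ((n - i).choose (k - 1) : ℝ) * (Nat.factorial (k - 1) : ℝ) *
        (∏ a ∈ Icc ((i : ℤ) - 1) ((n : ℤ) - (k : ℤ) - 1), ((a : ℝ) + ρ)) *
        (1 / ((i : ℝ) - 1 + ρ)) * (∏ a ∈ Icc (i : ℤ) ((n : ℤ) - 1), ((a : ℝ) + ρ))⁻¹ =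
      ((n - i).choose (k - 1) : ℝ) * (Nat.factorial (k - 1) : ℝ) *
        (∏ a ∈ Icc ((n : ℤ) - (k : ℤ)) ((n : ℤ) - 1), ((a : ℝ) + ρ))⁻¹ := by
    intro i hi
    rw [mem_Icc] at hi
    by_cases hik : i + k ≤ n + 1
    · have h := prod_Icc_mul_inv_eq_inv_prod_Icc (fun x : ℤ => (x : ℝ) + ρ) (a := i)
        (b := n - k) (c := n - 1) (fun x hx => hpos x (by rw [mem_Icc] at hx; omega))
        (by omega) (by omega) (by omega)
      push_cast at h
      rw [← h]
      ring
    · rw [Nat.choose_eq_zero_of_lt (by omega)]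
      simp
  rw [sum_congr rfl hterm, ← sum_mul, ← sum_mul, ← Nat.cast_sum, sum_Icc_choose_sub_s14,
    Nat.sub_add_cancel hk, prod_Icc_intCast_eq_descFactorial hkn,
    Nat.descFactorial_eq_factorial_mul_choose, ← Nat.mul_factorial_pred (by omega : k ≠ 0)]
  push_cast
  field_simp
end
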